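/- (Inradius bound for wide r-ball bodies) Let 0 < r ≤ π/2, d ≥ 2, and let X ⊂ S^d be nonempty closed with diam_s(X) ≤ r. Then the inradius of B_s^d[X, r] is at least r − R_J, where R_J is the circumradius of a regular spherical d-simplex of edge length r (the spherical Jung radius for diameter r). In particular B_s^d[X, r] contains a closed spherical ball of radius r − R_J. -/
import Mathlib


open scoped RealInnerProductSpace
open Real

/-- Spherical (geodesic) distance between unit vectors. -/
noncomputable def sdist {n : ℕ} (x y : EuclideanSpace ℝ (Fin n)) : ℝ :=
  Real.arccos ⟪x, y⟫

/-- The unit sphere in `ℝⁿ`. -/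
def usphere (n : ℕ) : Set (EuclideanSpace ℝ (Fin n)) := {x | ‖x‖ = 1}

/-- Spherical diameter of a set. -/
noncomputable def sdiam {n : ℕ} (X : Set (EuclideanSpace ℝ (Fin n))) : ℝ :=
  sSup {δ | ∃ x ∈ X, ∃ y ∈ X, δ = sdist x y}

/-- Closed spherical ball of center `c` and radius `ρ`. -/
def sball {n : ℕ} (c : EuclideanSpace ℝ (Fin n)) (ρ : ℝ) : Set (EuclideanSpace ℝ (Fin n)) :=
  {y | ‖y‖ = 1 ∧ sdist c y ≤ ρ}

/-- The `r`-dual set `X^r` of `X`: points of the sphere within spherical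
distance `r` of every point of `X`. -/
def sdual {n : ℕ} (r : ℝ) (X : Set (EuclideanSpace ℝ (Fin n))) :
    Set (EuclideanSpace ℝ (Fin n)) :=
  {y | ‖y‖ = 1 ∧ ∀ x ∈ X, sdist x y ≤ r}

/-- The shortest geodesic arc between two (non-antipodal) unit vectors:
normalized nonnegative combinations. -/
def geoArc {n : ℕ} (a b : EuclideanSpace ℝ (Fin n)) :
    Set (EuclideanSpace ℝ (Fin n)) :=
  {z | ‖z‖ = 1 ∧ ∃ s t : ℝ, 0 ≤ s ∧ 0 ≤ t ∧ 0 < s + t ∧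
    ∃ k : ℝ, 0 < k ∧ z = k • (s • a + t • b)}

/-- Spherical convexity. -/
def SphConvex {n : ℕ} (Q : Set (EuclideanSpace ℝ (Fin n))) : Prop :=
  Q ⊆ usphere n ∧ (∀ x ∈ Q, -x ∉ Q) ∧ ∀ x ∈ Q, ∀ y ∈ Q, geoArc x y ⊆ Q

/-- Minimal spherical width: infimum of widths of lunes containing `K`. -/
noncomputable def swidth {n : ℕ} (K : Set (EuclideanSpace ℝ (Fin n))) : ℝ :=
  sInf {w | ∃ c₁ c₂ : EuclideanSpace ℝ (Fin n), ‖c₁‖ = 1 ∧ ‖c₂‖ = 1 ∧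
    c₁ ≠ c₂ ∧ c₁ ≠ -c₂ ∧ K ⊆ sball c₁ (π / 2) ∩ sball c₂ (π / 2) ∧
    w = π - sdist c₁ c₂}


lemma sdist_symm {n : ℕ} (x y : EuclideanSpace ℝ (Fin n)) : sdist x y = sdist y x := by
  unfold sdist; rw [real_inner_comm]

lemma arccos_antitone : Antitone Real.arccos := fun x y h => by
  simp only [Real.arccos]
  linarith [Real.monotone_arcsin h]

lemma sdist_triangle {n : ℕ} {x y z : EuclideanSpace ℝ (Fin n)}
    (hx : ‖x‖ = 1) (hy : ‖y‖ = 1) (hz : ‖z‖ = 1) :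
    sdist x z ≤ sdist x y + sdist y z := by
  set a := sdist x y with ha
  set b := sdist y z with hb
  have ha0 : 0 ≤ a := Real.arccos_nonneg _
  have hb0 : 0 ≤ b := Real.arccos_nonneg _
  by_cases hab : a + b ≤ π
  · have hxy : |⟪x, y⟫| ≤ 1 := by simpa [hx, hy] using abs_real_inner_le_norm x y
    have hyz : |⟪y, z⟫| ≤ 1 := by simpa [hy, hz] using abs_real_inner_le_norm y z
    have hxy' := abs_le.1 hxy
    have hyz' := abs_le.1 hyz
    have hcosa : Real.cos a = ⟪x, y⟫ := Real.cos_arccos hxy'.1 hxy'.2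
    have hcosb : Real.cos b = ⟪y, z⟫ := Real.cos_arccos hyz'.1 hyz'.2
    have hsina : Real.sin a = Real.sqrt (1 - ⟪x, y⟫ ^ 2) := Real.sin_arccos _
    have hsinb : Real.sin b = Real.sqrt (1 - ⟪y, z⟫ ^ 2) := Real.sin_arccos _
    set u := x - ⟪x, y⟫ • y with hu
    set v := z - ⟪y, z⟫ • y with hv
    have hyy : ⟪y, y⟫ = (1 : ℝ) := by
      rw [real_inner_self_eq_norm_sq, hy]; norm_num
    have huv : ⟪u, v⟫ = ⟪x, z⟫ - ⟪x, y⟫ * ⟪y, z⟫ := by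
      simp only [hu, hv, inner_sub_left, inner_sub_right, real_inner_smul_left,
        real_inner_smul_right, hyy]
      rw [real_inner_comm y x, real_inner_comm z y]
      ring
    have hnu : ‖u‖ = Real.sqrt (1 - ⟪x, y⟫ ^ 2) := by
      have : ‖u‖ ^ 2 = 1 - ⟪x, y⟫ ^ 2 := by
        rw [← real_inner_self_eq_norm_sq]
        simp only [hu, inner_sub_left, inner_sub_right, real_inner_smul_left,
          real_inner_smul_right, hyy]
        rw [real_inner_self_eq_norm_sq, hx, real_inner_comm y x]
        ring
      rw [← this, Real.sqrt_sq (norm_nonneg _)]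
    have hnv : ‖v‖ = Real.sqrt (1 - ⟪y, z⟫ ^ 2) := by
      have : ‖v‖ ^ 2 = 1 - ⟪y, z⟫ ^ 2 := by
        rw [← real_inner_self_eq_norm_sq]
        simp only [hv, inner_sub_left, inner_sub_right, real_inner_smul_left,
          real_inner_smul_right, hyy]
        rw [real_inner_self_eq_norm_sq, hz, real_inner_comm y z]
        ring
      rw [← this, Real.sqrt_sq (norm_nonneg _)]
    have hCS : -(‖u‖ * ‖v‖) ≤ ⟪u, v⟫ := neg_le_of_neg_le (by
      have := abs_real_inner_le_norm u v
      have := neg_abs_le ⟪u, v⟫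
      linarith)
    have hkey : Real.cos (a + b) ≤ ⟪x, z⟫ := by
      rw [Real.cos_add, hcosa, hcosb, hsina, hsinb]
      rw [huv] at hCS
      rw [hnu, hnv] at hCS
      linarith
    calc sdist x z = Real.arccos ⟪x, z⟫ := rfl
      _ ≤ Real.arccos (Real.cos (a + b)) := arccos_antitone hkey
      _ = a + b := Real.arccos_cos (by linarith) hab
  · have := Real.arccos_le_pi ⟪x, z⟫
    unfold sdist
    linarith

theorem inradius_bound (d : ℕ) (hd : 2 ≤ d) (r RJ : ℝ)
    (hr : 0 < r) (hr2 : r ≤ π / 2) (hRJ0 : 0 ≤ RJ) (hRJr : RJ ≤ r)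
    (hJung : ∀ Z : Set (EuclideanSpace ℝ (Fin (d + 1))),
      Z ⊆ usphere (d + 1) → sdiam Z ≤ r →
      ∃ x0, ‖x0‖ = 1 ∧ Z ⊆ sball x0 RJ)
    (X : Set (EuclideanSpace ℝ (Fin (d + 1)))) (hX : X.Nonempty)
    (hXc : IsClosed X) (hXs : X ⊆ usphere (d + 1)) (hdiam : sdiam X ≤ r) :
    ∃ c, ‖c‖ = 1 ∧ sball c (r - RJ) ⊆ sdual r X := by
  obtain ⟨x0, hx0, hsub⟩ := hJung X hXs hdiam
  refine ⟨x0, hx0, fun y hy => ?_⟩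
  obtain ⟨hy1, hy2⟩ := hy
  refine ⟨hy1, fun x hxX => ?_⟩
  obtain ⟨hxn, hxd⟩ := hsub hxX
  have hx1 : ‖x‖ = 1 := hXs hxX
  have := sdist_triangle (x := x) (y := x0) (z := y) hx1 hx0 hy1
  rw [sdist_symm x x0] at this
  linarith
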